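/- Let a, b ∈ ℝ and define the sequences x_1 = (a + √(a² + 8))/2, y_1 = (s + √(s² + 6))/2 where s = b − (|a| + √2)/2, and recursively x_{n+1} = (A_n + √(A_n² + 8))/2 with A_n = a − 1/y_n + 1/(x_n + y_n), y_{n+1} = (B_n + √(B_n² + 8))/2 with B_n = b − 1/x_n + 1/(x_n + y_n). Then x_n > 0 and y_n > 0 for all n ≥ 1, and for all n ≥ 1, x_{n+1} < (a + √(a² + 8))/2 and y_{n+1} < (b + √(b² + 8))/2. -/

import Mathlib

/-!
Every iterate has the form `(t + √(t² + c)) / 2` with `c > 0`, hence is positive. This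
expression is strictly increasing in `t`, and for `x, y > 0` the arguments
`a - 1/y + 1/(x+y)` and `b - 1/x + 1/(x+y)` of the recursion lie strictly below `a` and `b`.
-/

/-- The iterative scheme of Proposition 4.2: `dysonSeq a b n = (x_{n+1}, y_{n+1})`,
i.e. `dysonSeq a b 0` is the pair `(x_1, y_1)` of the proposition. -/
noncomputable def dysonSeq (a b : ℝ) : ℕ → ℝ × ℝ
  | 0 =>
      ((a + Real.sqrt (a ^ 2 + 8)) / 2,
        ((b - (|a| + Real.sqrt 2) / 2)
          + Real.sqrt ((b - (|a| + Real.sqrt 2) / 2) ^ 2 + 6)) / 2)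
  | n + 1 =>
      let p := dysonSeq a b n
      let A := a - 1 / p.2 + 1 / (p.1 + p.2)
      let B := b - 1 / p.1 + 1 / (p.1 + p.2)
      ((A + Real.sqrt (A ^ 2 + 8)) / 2, (B + Real.sqrt (B ^ 2 + 8)) / 2)

open Real

/-- The positive root of `x ^ 2 = t * x + c / 4`. -/
noncomputable def quadRoot (c t : ℝ) : ℝ := (t + √(t ^ 2 + c)) / 2

section QuadRoot

variable {c : ℝ}

lemma abs_lt_sqrt_sq_add (hc : 0 < c) (t : ℝ) : |t| < √(t ^ 2 + c) :=
  (lt_sqrt (abs_nonneg t)).2 (by rw [sq_abs]; linarith)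

lemma quadRoot_pos (hc : 0 < c) (t : ℝ) : 0 < quadRoot c t := by
  have := abs_lt_sqrt_sq_add hc t
  have := neg_abs_le t
  unfold quadRoot
  linarith

lemma quadRoot_strictMono (hc : 0 < c) : StrictMono (quadRoot c) := by
  intro s t hst
  have hs := abs_lt_sqrt_sq_add hc s
  have ht := abs_lt_sqrt_sq_add hc t
  set u := √(t ^ 2 + c)
  set v := √(s ^ 2 + c)
  have hsq : (v - u) * (u + v) = -(t - s) * (t + s) := by
    linear_combination (sq_sqrt (by positivity : 0 ≤ s ^ 2 + c)) -
      sq_sqrt (by positivity : 0 ≤ t ^ 2 + c)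
  -- `|t + s| < u + v`, so the square roots move by less than `t - s`.
  have hsum : -(t + s) < u + v := by linarith [neg_le_abs t, neg_le_abs s]
  unfold quadRoot
  by_contra! hle
  have : (t - s) * (u + v) ≤ (v - u) * (u + v) :=
    mul_le_mul_of_nonneg_right (by linarith) (by linarith [abs_nonneg t, abs_nonneg s])
  linarith [mul_lt_mul_of_pos_left hsum (sub_pos.2 hst)]

end QuadRoot

lemma sub_one_div_add_one_div_add_lt (a : ℝ) {x y : ℝ} (hx : 0 < x) (hy : 0 < y) :
    a - 1 / y + 1 / (x + y) < a := by
  have : 1 / (x + y) < 1 / y := one_div_lt_one_div_of_lt hy (by linarith)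
  linarith

lemma dysonSeq_succ (a b : ℝ) (n : ℕ) :
    dysonSeq a b (n + 1) =
      (quadRoot 8 (a - 1 / (dysonSeq a b n).2 + 1 / ((dysonSeq a b n).1 + (dysonSeq a b n).2)),
        quadRoot 8 (b - 1 / (dysonSeq a b n).1 + 1 / ((dysonSeq a b n).1 + (dysonSeq a b n).2))) :=
  rfl

lemma dysonSeq_pos (a b : ℝ) (n : ℕ) : 0 < (dysonSeq a b n).1 ∧ 0 < (dysonSeq a b n).2 := by
  cases n with
  | zero => exact ⟨quadRoot_pos (by norm_num) a, quadRoot_pos (by norm_num) _⟩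
  | succ n =>
    rw [dysonSeq_succ]
    exact ⟨quadRoot_pos (by norm_num) _, quadRoot_pos (by norm_num) _⟩

/-- Step 1 of the proof of Proposition 4.2. All iterates
`x_n, y_n` (here `x_n = (dysonSeq a b (n-1)).1`, `y_n = (dysonSeq a b (n-1)).2`)
are positive, and for `n ≥ 1` one has `x_{n+1} < (a + √(a²+8))/2` and
`y_{n+1} < (b + √(b²+8))/2`. -/
theorem dysonSeq_pos_and_bounded (a b : ℝ) :
    (∀ n : ℕ, 0 < (dysonSeq a b n).1 ∧ 0 < (dysonSeq a b n).2) ∧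
    (∀ n : ℕ, 1 ≤ n →
      (dysonSeq a b n).1 < (a + Real.sqrt (a ^ 2 + 8)) / 2 ∧
      (dysonSeq a b n).2 < (b + Real.sqrt (b ^ 2 + 8)) / 2) := by
  refine ⟨dysonSeq_pos a b, fun n hn => ?_⟩
  obtain ⟨m, rfl⟩ := Nat.exists_eq_add_of_le' hn
  obtain ⟨hx, hy⟩ := dysonSeq_pos a b m
  have hB := sub_one_div_add_one_div_add_lt b hy hx
  rw [add_comm (dysonSeq a b m).2] at hB
  rw [dysonSeq_succ]
  exact ⟨quadRoot_strictMono (by norm_num) (sub_one_div_add_one_div_add_lt a hx hy),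
    quadRoot_strictMono (by norm_num) hB⟩
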